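/- arXiv:math/0302083 — 2 statements merged into one kernel-verified Lean document; each statement's English description precedes it below -/
import Mathlib

section
/- The number of cyclically reduced words of length exactly N over the alphabet of 2p letters (generators of F_p and their inverses) equals (2p-1)^N + p + (p-1)·(-1)^N for N ≥ 1. -/
/-- A word (list of letters, each a generator index together with a Boolean sign)
is reduced if no two adjacent letters are mutually inverse. -/
def IsReducedWord {p : ℕ} (l : List (Fin p × Bool)) : Prop :=
  List.Chain' (fun a b => b ≠ (a.1, !a.2)) l

/-- A word is cyclically reduced if it is reduced and its first and last letters
are not mutually inverse. -/
def IsCyclicallyReducedWord {p : ℕ} (l : List (Fin p × Bool)) : Prop :=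
  IsReducedWord l ∧ ∀ a ∈ l.head?, ∀ b ∈ l.getLast?, b ≠ (a.1, !a.2)

/-!
A reduced word is a chain for the relation `b ≠ a⁻¹` on the `2p` letters, so cyclically
reduced words of length `N` are counted by the trace of `M ^ N`, where `M = J - P` is the
transfer matrix of that relation, `J` the all-ones matrix and `P` the permutation matrix of
`a ↦ a⁻¹`. From `J * J = 2p • J`, `J * P = P * J = J` and `P * P = 1` one gets
`M ^ N = q • J + (-P) ^ N` with `2p * q = (2p - 1) ^ N - (-1) ^ N`, and since no letter is its
own inverse, `trace P = 0`; taking traces gives the formula.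
-/

open Matrix

section TransferMatrix

variable {α : Type*}

def transferMatrix (R : α → α → Prop) [DecidableRel R] (S : Type*) [Zero S] [One S] :
    Matrix α α S :=
  Matrix.of fun a b => if R a b then 1 else 0

@[simp]
lemma transferMatrix_apply (R : α → α → Prop) [DecidableRel R] (S : Type*) [Zero S] [One S]
    (a b : α) : transferMatrix R S a b = if R a b then 1 else 0 :=
  rfl

lemma transferMatrix_not (R : α → α → Prop) [DecidableRel R] (S : Type*) [Ring S] :
    transferMatrix (fun a b => ¬ R a b) S =
      transferMatrix (fun _ _ => True) S - transferMatrix R S := by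
  ext a b
  by_cases h : R a b <;> simp [h]

def chainsBetween (R : α → α → Prop) (n : ℕ) (a b : α) : Set (List α) :=
  {l | l.IsChain R ∧ l.length = n + 1 ∧ l.head? = some a ∧ l.getLast? = some b}

variable {R : α → α → Prop}

lemma chainsBetween_finite [Finite α] (n : ℕ) (a b : α) : (chainsBetween R n a b).Finite :=
  (List.finite_length_eq α (n + 1)).subset fun _ hl => hl.2.1

lemma chainsBetween_zero (a b : α) :
    chainsBetween R 0 a b = {l | l = [a] ∧ a = b} := by
  ext l
  constructor
  · rintro ⟨-, hlen, hhead, hlast⟩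
    obtain ⟨x, rfl⟩ := List.length_eq_one_iff.mp hlen
    simp_all
  · rintro ⟨rfl, rfl⟩
    exact ⟨List.isChain_singleton a, rfl, rfl, rfl⟩

lemma chainsBetween_succ (n : ℕ) (a c : α) :
    chainsBetween R (n + 1) a c = ⋃ b : {b // R a b}, List.cons a '' chainsBetween R n b c := by
  ext l
  simp only [Set.mem_iUnion, Set.mem_image, Subtype.exists, exists_prop]
  constructor
  · rintro ⟨hchain, hlen, hhead, hlast⟩
    obtain ⟨x, b, l, rfl⟩ : ∃ x b l', l = x :: b :: l' := by
      match l, hlen with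
      | x :: b :: l', _ => exact ⟨x, b, l', rfl⟩
    obtain rfl : x = a := by simpa using hhead
    rw [List.isChain_cons_cons] at hchain
    exact ⟨b, hchain.1, b :: l,
      ⟨hchain.2, by simpa using hlen, rfl, by simpa using hlast⟩, rfl⟩
  · rintro ⟨b, hab, _ | ⟨x, l⟩, ⟨hchain, hlen, hhead, hlast⟩, rfl⟩
    · simp at hlen
    obtain rfl : x = b := by simpa using hhead
    exact ⟨List.isChain_cons_cons.mpr ⟨hab, hchain⟩, by simpa using hlen, rfl,
      by simpa using hlast⟩

theorem transferMatrix_pow_apply_eq_ncard [Fintype α] [DecidableEq α] [DecidableRel R]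
    (S : Type*) [Semiring S] (n : ℕ) (a b : α) :
    (transferMatrix R S ^ n) a b = (chainsBetween R n a b).ncard := by
  induction n generalizing a with
  | zero =>
    by_cases h : a = b <;> simp [chainsBetween_zero, h, one_apply]
  | succ n ih =>
    rw [chainsBetween_succ, Set.ncard_iUnion_of_finite, finsum_eq_sum_of_fintype, pow_succ',
      mul_apply]
    · simp only [transferMatrix_apply, ite_mul, one_mul, zero_mul, ih,
        Set.ncard_image_of_injective _ List.cons_injective, Nat.cast_sum]
      rw [Finset.sum_ite, Finset.sum_const_zero, add_zero,
        Finset.sum_subtype _ fun x => Finset.mem_filter_univ x]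
    · exact fun _ => (chainsBetween_finite n _ b).image _
    · intro x y hxy
      refine Set.disjoint_left.mpr ?_
      rintro _ ⟨l, hl, rfl⟩ ⟨l', hl', hll'⟩
      obtain rfl := List.cons_injective hll'
      exact hxy (Subtype.ext (Option.some_injective _ (hl.2.2.1.symm.trans hl'.2.2.1)))

def cyclicChains (R : α → α → Prop) (n : ℕ) : Set (List α) :=
  {l | l.IsChain R ∧ l.length = n + 1 ∧ ∀ a ∈ l.head?, ∀ b ∈ l.getLast?, R b a}

lemma cyclicChains_eq_iUnion (n : ℕ) :
    cyclicChains R n =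
      ⋃ ab : {ab : α × α // R ab.2 ab.1}, chainsBetween R n ab.1.1 ab.1.2 := by
  ext l
  simp only [cyclicChains, chainsBetween, Set.mem_ofPred_eq, Set.mem_iUnion, Subtype.exists,
    Prod.exists, exists_prop]
  constructor
  · rintro ⟨hchain, hlen, hcyc⟩
    rcases l with _ | ⟨a, l⟩
    · simp at hlen
    have hb := List.getLast?_eq_some_getLast (List.cons_ne_nil a l)
    exact ⟨a, _, hcyc a rfl _ hb, hchain, hlen, rfl, hb⟩
  · rintro ⟨a, b, hba, hchain, hlen, ha, hb⟩
    refine ⟨hchain, hlen, ?_⟩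
    simp [ha, hb, hba]

theorem ncard_cyclicChains_eq_trace [Fintype α] [DecidableEq α] [DecidableRel R] (S : Type*)
    [Semiring S] (n : ℕ) :
    (cyclicChains R n).ncard = trace (transferMatrix R S ^ (n + 1)) := by
  rw [cyclicChains_eq_iUnion, Set.ncard_iUnion_of_finite, finsum_eq_sum_of_fintype, trace,
    pow_succ]
  · simp only [diag_apply, mul_apply, transferMatrix_apply, mul_ite, mul_one, mul_zero,
      transferMatrix_pow_apply_eq_ncard]
    rw [Nat.cast_sum, ← Finset.sum_subtype _ (fun x => Finset.mem_filter_univ x)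
      fun ab : α × α => ((chainsBetween R n ab.1 ab.2).ncard : S),
      Finset.sum_filter, Fintype.sum_prod_type]
  · exact fun _ => chainsBetween_finite n _ _
  · intro x y hxy
    refine Set.disjoint_left.mpr fun l hx hy => hxy (Subtype.ext (Prod.ext ?_ ?_))
    · exact Option.some_injective _ (hx.2.2.1.symm.trans hy.2.2.1)
    · exact Option.some_injective _ (hx.2.2.2.symm.trans hy.2.2.2)

end TransferMatrix

theorem sub_pow_eq_geom_sum₂_smul_add {R : Type*} [Ring R] {J P : R} {n : ℤ}
    (hJJ : J * J = n • J) (hJP : J * P = J) (hPJ : P * J = J) (k : ℕ) :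
    (J - P) ^ k =
      (∑ i ∈ Finset.range k, (n - 1) ^ i * (-1) ^ (k - 1 - i)) • J + (-P) ^ k := by
  have hPJ_pow (k : ℕ) : (-P) ^ k * J = (-1 : ℤ) ^ k • J := by
    induction k with
    | zero => simp
    | succ k ih => rw [pow_succ', mul_assoc, ih, mul_smul_comm, neg_mul, hPJ, pow_succ']; module
  induction k with
  | zero => simp
  | succ k ih =>
    have hcoeff : ∑ i ∈ Finset.range (k + 1), (n - 1) ^ i * (-1 : ℤ) ^ (k + 1 - 1 - i)
        = (n - 1) * ∑ i ∈ Finset.range k, (n - 1) ^ i * (-1) ^ (k - 1 - i) + (-1) ^ k := by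
      rw [geom_sum₂_comm, Nat.add_sub_cancel, geom_sum₂_succ_eq, geom_sum₂_comm, add_comm]
    rw [pow_succ, ih, hcoeff, add_mul, smul_mul_assoc, mul_sub, mul_sub, hJJ, hJP, hPJ_pow,
      pow_succ (-P), mul_neg]
    module

theorem trace_pow_transferMatrix_ne_involution {α : Type*} [Fintype α] [DecidableEq α]
    {σ : α → α} (hσ : Function.Involutive σ) (hfix : ∀ a, σ a ≠ a) {p : ℕ}
    (hcard : Fintype.card α = 2 * p) (N : ℕ) :
    trace (transferMatrix (fun a b => b ≠ σ a) ℤ ^ N) =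
      (2 * p - 1) ^ N + p + (p - 1) * (-1) ^ N := by
  set J := transferMatrix (fun (_ _ : α) => True) ℤ
  set P := transferMatrix (fun a b => b = σ a) ℤ
  have hJJ : J * J = (2 * p : ℤ) • J := by
    ext a c
    simp [J, mul_apply, hcard]
  have hJP : J * P = J := by
    ext a c
    simp [J, P, mul_apply, eq_comm (a := c), hσ.eq_iff]
  have hPJ : P * J = J := by
    ext a c
    simp [J, P, mul_apply]
  have hPP : (-P) * (-P) = 1 := by
    ext a c
    rw [neg_mul_neg]
    simp only [P, transferMatrix_apply, mul_apply, boole_mul, Finset.sum_ite_eq',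
      Finset.mem_univ, if_true, hσ a, one_apply, eq_comm]
  have htrJ : trace J = 2 * p := by simp [J, trace, hcard]
  have htrP : trace P = 0 := by simp [P, trace, fun a => (hfix a).symm]
  have htrPN : trace ((-P) ^ N) = p * (1 + (-1) ^ N) := by
    rcases N.even_or_odd with ⟨m, rfl⟩ | ⟨m, rfl⟩
    · rw [← two_mul, pow_mul, sq, hPP, one_pow, trace_one, hcard, pow_mul]
      push_cast
      ring
    · rw [pow_succ, pow_mul, sq, hPP, one_pow, one_mul, trace_neg, htrP, pow_succ, pow_mul]
      ring
  rw [transferMatrix_not, sub_pow_eq_geom_sum₂_smul_add hJJ hJP hPJ, trace_add, trace_smul, htrJ,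
    smul_eq_mul, htrPN]
  linear_combination geom_sum₂_mul ((2 * p : ℤ) - 1) (-1) N

theorem cyclically_reduced_word_count_general (p N : ℕ) (hN : 1 ≤ N) :
    ({l : List (Fin p × Bool) | IsCyclicallyReducedWord l ∧ l.length = N}.ncard : ℤ)
      = (2 * p - 1) ^ N + p + (p - 1) * (-1) ^ N := by
  obtain ⟨n, rfl⟩ := Nat.exists_eq_add_of_le' hN
  have hinv : Function.Involutive fun a : Fin p × Bool => (a.1, !a.2) := fun a => by simp
  have hsymm (a b : Fin p × Bool) : b ≠ (a.1, !a.2) ↔ a ≠ (b.1, !b.2) :=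
    (not_congr hinv.eq_iff).symm.trans ne_comm
  have hwords : {l : List (Fin p × Bool) | IsCyclicallyReducedWord l ∧ l.length = n + 1}
      = cyclicChains (fun a b => b ≠ (a.1, !a.2)) n := by
    ext l
    exact ⟨fun ⟨⟨hchain, hcyc⟩, hlen⟩ =>
        ⟨hchain, hlen, fun a ha b hb => (hsymm a b).1 (hcyc a ha b hb)⟩,
      fun ⟨hchain, hlen, hcyc⟩ =>
        ⟨⟨hchain, fun a ha b hb => (hsymm a b).2 (hcyc a ha b hb)⟩, hlen⟩⟩
  rw [hwords, ncard_cyclicChains_eq_trace ℤ, trace_pow_transferMatrix_ne_involution (p := p) hinv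
    (fun a => by simp [Prod.ext_iff]) (by simp [mul_comm])]

theorem cyclically_reduced_word_count (p N : ℕ) (hp : 2 ≤ p) (hN : 1 ≤ N) :
    ({l : List (Fin p × Bool) | IsCyclicallyReducedWord l ∧ l.length = N}.ncard : ℤ)
      = (2 * p - 1) ^ N + p + (p - 1) * (-1) ^ N :=
  cyclically_reduced_word_count_general p N hN
end

section
/- Let b_k be the number of cyclically reduced elements of length k in a set S ⊆ F_2 closed under conjugation, and suppose b_k ≤ P(k) for a polynomial P. Then #{w ∈ S : |w| ≤ N} ≤ Σ_{k=0}^N P(k)·2·3^{⌊(N−k)/2⌋}, and hence limsup_N (#{w ∈ S : |w| ≤ N})^{1/N} ≤ √3, giving exponential growth rate d(S) = limsup (#{w∈S:|w|≤N}/(2·3^N−1))^{1/N} ≤ 1/√3. -/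
open Filter

/-- An element of a free group is cyclically reduced if its reduced word does not
begin and end with mutually inverse letters. -/
def IsCyclicallyReduced (w : FreeGroup (Fin 2)) : Prop :=
  ∀ a ∈ w.toWord.head?, ∀ b ∈ w.toWord.getLast?, b ≠ (a.1, !a.2)

/-!
Cancelling the first and last letters of `w` as long as they are mutually inverse writes
`w = v u v⁻¹` with `u` cyclically reduced and `|w| = |u| + 2|v|`, and `u ∈ S` because `S` is
closed under conjugation. So the elements of `S` of length `≤ N` are covered by the pairs `(u, v)`
with `|u| = k ≤ N` and `|v| ≤ (N - k) / 2`: at most `P(k)` choices of `u` and, since a reduced word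
of `F₂` has `4` choices for its first letter and `3` for each later one, at most
`2 · 3 ^ ((N - k) / 2)` choices of `v`. Bounding `P(k)` by a polynomial in `N` gives
`#{w ∈ S : |w| ≤ N} ≤ C (N + 1) ^ m √3 ^ N`, and polynomial factors disappear under `N`-th roots.
-/

open Topology

theorem Set.ncard_le_mul_ncard_of_mapsTo {α β : Type*} {s : Set α} {t : Set β} {f : α → β}
    (hf : MapsTo f s t) (ht : t.Finite) {n : ℕ} (hn : ∀ b ∈ t, (s ∩ f ⁻¹' {b}).ncard ≤ n) :
    s.ncard ≤ n * t.ncard := by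
  have hs : s = ⋃ b ∈ ht.toFinset, s ∩ f ⁻¹' {b} := by
    ext a
    simp only [mem_iUnion, Finite.mem_toFinset, mem_inter_iff, mem_preimage, mem_singleton_iff]
    exact ⟨fun ha => ⟨f a, hf ha, ha, rfl⟩, fun ⟨_, _, ha, _⟩ => ha⟩
  calc s.ncard = (⋃ b ∈ ht.toFinset, s ∩ f ⁻¹' {b}).ncard := congrArg ncard hs
    _ ≤ ∑ b ∈ ht.toFinset, (s ∩ f ⁻¹' {b}).ncard := ht.toFinset.set_ncard_biUnion_le _
    _ ≤ ∑ _b ∈ ht.toFinset, n := Finset.sum_le_sum fun b hb => hn b (ht.mem_toFinset.1 hb)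
    _ = n * t.ncard := by
        rw [Finset.sum_const, smul_eq_mul, ncard_eq_toFinset_card t ht, mul_comm]

namespace FreeGroup

variable {α : Type*}

theorem exists_conj_isCyclicallyReduced [DecidableEq α] (w : FreeGroup α) :
    ∃ u v : FreeGroup α, w = v * u * v⁻¹ ∧ IsCyclicallyReduced u.toWord ∧
      u.norm + 2 * v.norm = w.norm := by
  set c := reduceCyclically.conjugator w.toWord
  set r := reduceCyclically w.toWord
  have hw : c ++ r ++ invRev c = w.toWord := reduceCyclically.conj_conjugator_reduceCyclically _
  have hr : IsReduced r := (isReduced_toWord (x := w)).infix ⟨c, invRev c, hw⟩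
  have hc : IsReduced c := (isReduced_toWord (x := w)).infix
    ⟨[], r ++ invRev c, by rw [← hw, List.nil_append, List.append_assoc]⟩
  refine ⟨mk r, mk c, ?_, ?_, ?_⟩
  · rw [inv_mk, mul_mk, mul_mk, hw, mk_toWord]
  · rw [toWord_mk, hr.reduce_eq]
    exact reduceCyclically.isCyclicallyReduced isReduced_toWord
  · simp only [norm, toWord_mk, hr.reduce_eq, hc.reduce_eq, ← hw, List.length_append,
      invRev_length]
    ring

theorem finite_setOf_norm_le [DecidableEq α] [Finite α] (m : ℕ) :
    {x : FreeGroup α | x.norm ≤ m}.Finite :=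
  (List.finite_length_le _ m).preimage toWord_injective.injOn

theorem ncard_norm_le_le_sum_mul_of_conj_mem [DecidableEq α] [Finite α] {S : Set (FreeGroup α)}
    (hS : ∀ w ∈ S, ∀ v : FreeGroup α, v * w * v⁻¹ ∈ S) (N : ℕ) :
    {w ∈ S | w.norm ≤ N}.ncard ≤ ∑ k ∈ Finset.range (N + 1),
      {u ∈ S | IsCyclicallyReduced u.toWord ∧ u.norm = k}.ncard *
        {v : FreeGroup α | v.norm ≤ (N - k) / 2}.ncard := by
  set T := fun k => {u ∈ S | IsCyclicallyReduced u.toWord ∧ u.norm = k}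
  set V := fun k => {v : FreeGroup α | v.norm ≤ (N - k) / 2}
  set conj := fun p : FreeGroup α × FreeGroup α => p.2 * p.1 * p.2⁻¹
  have hsub : {w ∈ S | w.norm ≤ N} ⊆ ⋃ k ∈ Finset.range (N + 1), conj '' (T k ×ˢ V k) := by
    rintro w ⟨hwS, hwN⟩
    obtain ⟨u, v, rfl, hu, hnorm⟩ := exists_conj_isCyclicallyReduced w
    have huS : u ∈ S := by simpa [mul_assoc] using hS _ hwS v⁻¹
    simp only [Set.mem_iUnion, Finset.mem_range]
    exact ⟨u.norm, by omega, ⟨u, v⟩, ⟨⟨huS, hu, rfl⟩, show v.norm ≤ (N - u.norm) / 2 by omega⟩, rfl⟩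
  have hfin : ∀ k, (T k ×ˢ V k).Finite := fun k =>
    ((finite_setOf_norm_le k).subset fun u hu => hu.2.2.le).prod (finite_setOf_norm_le _)
  calc _ ≤ (⋃ k ∈ Finset.range (N + 1), conj '' (T k ×ˢ V k)).ncard :=
        Set.ncard_le_ncard hsub
          ((Finset.range _).finite_toSet.biUnion fun k _ => (hfin k).image _)
    _ ≤ ∑ k ∈ Finset.range (N + 1), (conj '' (T k ×ˢ V k)).ncard :=
        Finset.set_ncard_biUnion_le _ _
    _ ≤ ∑ k ∈ Finset.range (N + 1), (T k).ncard * (V k).ncard :=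
        Finset.sum_le_sum fun k _ => (Set.ncard_image_le (hfin k)).trans Set.ncard_prod.le

theorem ncard_setOf_isReduced_cons_le [Finite α] (c : α × Bool) (L : List (α × Bool)) :
    {x : α × Bool | IsReduced (x :: c :: L)}.ncard ≤ 2 * Nat.card α - 1 := by
  calc _ ≤ ({(c.1, !c.2)}ᶜ : Set (α × Bool)).ncard := by
        refine Set.ncard_le_ncard (fun x hx hxc => ?_) (Set.toFinite _)
        rw [Set.mem_singleton_iff] at hxc
        subst hxc
        simpa using (isReduced_cons_cons.1 hx).1
    _ = 2 * Nat.card α - 1 := by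
        rw [Set.ncard_compl, Set.ncard_singleton, Nat.card_prod,
          Nat.card_eq_fintype_card (α := Bool), Fintype.card_bool, mul_comm]

theorem ncard_setOf_isReduced_length_eq_le [Finite α] (j : ℕ) :
    {L : List (α × Bool) | IsReduced L ∧ L.length = j + 1}.ncard ≤
      2 * Nat.card α * (2 * Nat.card α - 1) ^ j := by
  induction j with
  | zero =>
    calc _ ≤ (Set.range fun x : α × Bool => [x]).ncard := by
          refine Set.ncard_le_ncard ?_ (Set.finite_range _)
          rintro _ ⟨-, h⟩
          obtain ⟨x, rfl⟩ := List.length_eq_one_iff.1 h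
          exact ⟨x, rfl⟩
      _ ≤ Nat.card (α × Bool) := by
          rw [← Set.image_univ]
          exact (Set.ncard_image_le Set.finite_univ).trans (Set.ncard_univ _).le
      _ = _ := by simp [Nat.card_prod, mul_comm]
  | succ j ih =>
    have hfiber (L : List (α × Bool)) (hL : IsReduced L ∧ L.length = j + 1) :
        ({L' : List (α × Bool) | IsReduced L' ∧ L'.length = j + 1 + 1} ∩
          List.tail ⁻¹' {L}).ncard ≤ 2 * Nat.card α - 1 := by
      obtain ⟨c, L, rfl⟩ := List.exists_cons_of_length_eq_add_one hL.2
      calc _ ≤ ((· :: c :: L) '' {x | IsReduced (x :: c :: L)}).ncard := by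
            refine Set.ncard_le_ncard ?_ (Set.toFinite _)
            rintro (_ | ⟨x, L'⟩) ⟨⟨hred, hlen⟩, hL'⟩
            · simp at hlen
            obtain rfl : L' = c :: L := hL'
            exact ⟨x, hred, rfl⟩
        _ ≤ 2 * Nat.card α - 1 :=
            (Set.ncard_image_le (Set.toFinite _)).trans (ncard_setOf_isReduced_cons_le c L)
    calc _ ≤ (2 * Nat.card α - 1) *
          {L : List (α × Bool) | IsReduced L ∧ L.length = j + 1}.ncard :=
          Set.ncard_le_mul_ncard_of_mapsTo
            (fun L hL =>
              Set.mem_ofPred.2 ⟨hL.1.infix (List.tail_suffix L).isInfix, by simp [hL.2]⟩)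
            ((List.finite_length_eq _ _).subset fun L hL => hL.2) hfiber
      _ ≤ _ := by rw [pow_succ]; nlinarith

theorem ncard_setOf_norm_le_le (m : ℕ) :
    {x : FreeGroup (Fin 2) | x.norm ≤ m}.ncard ≤ 2 * 3 ^ m := by
  set R := fun j => {L : List (Fin 2 × Bool) | IsReduced L ∧ L.length = j}
  have hR0 : (R 0).ncard ≤ 1 :=
    (Set.ncard_le_ncard (t := {[]}) (fun L hL => List.length_eq_zero_iff.1 hL.2)).trans_eq
      (Set.ncard_singleton _)
  have hR (j : ℕ) : (R (j + 1)).ncard ≤ 4 * 3 ^ j := by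
    simpa using ncard_setOf_isReduced_length_eq_le (α := Fin 2) j
  have hsum (m : ℕ) : ∑ j ∈ Finset.range (m + 1), (R j).ncard + 1 ≤ 2 * 3 ^ m := by
    induction m with
    | zero => simpa using hR0
    | succ m ih =>
      rw [Finset.sum_range_succ, pow_succ]
      have := hR m
      omega
  calc _ = (toWord '' {x : FreeGroup (Fin 2) | x.norm ≤ m}).ncard :=
        (Set.ncard_image_of_injective _ toWord_injective).symm
    _ ≤ (⋃ j ∈ Finset.range (m + 1), R j).ncard := by
        refine Set.ncard_le_ncard ?_ ((Finset.range _).finite_toSet.biUnion fun j _ =>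
          (List.finite_length_eq _ j).subset fun L hL => hL.2)
        rintro _ ⟨x, hx, rfl⟩
        simp only [Set.mem_iUnion, Finset.mem_range]
        exact ⟨x.norm, by simp only [Set.mem_ofPred_eq] at hx; omega, isReduced_toWord, rfl⟩
    _ ≤ ∑ j ∈ Finset.range (m + 1), (R j).ncard := Finset.set_ncard_biUnion_le _ _
    _ ≤ 2 * 3 ^ m := by have := hsum m; omega

end FreeGroup

theorem isCyclicallyReduced_iff_toWord {w : FreeGroup (Fin 2)} :
    IsCyclicallyReduced w ↔ FreeGroup.IsCyclicallyReduced w.toWord := by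
  rw [FreeGroup.isCyclicallyReduced_iff, IsCyclicallyReduced]
  simp only [FreeGroup.isReduced_toWord, true_and]
  constructor <;> intro h a ha b hb <;> have := h b hb a ha <;>
    cases a <;> cases b <;> simp_all [Prod.ext_iff]

theorem Polynomial.eval_le_sum_abs_coeff_mul_pow (P : Polynomial ℝ) {x y : ℝ} (hxy : |x| ≤ y)
    (hy : 1 ≤ y) :
    P.eval x ≤ (∑ i ∈ Finset.range (P.natDegree + 1), |P.coeff i|) * y ^ P.natDegree := by
  rw [P.eval_eq_sum_range, Finset.sum_mul]
  refine Finset.sum_le_sum fun i hi => ?_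
  calc P.coeff i * x ^ i ≤ |P.coeff i| * |x| ^ i := by
        rw [← abs_pow, ← abs_mul]; exact le_abs_self _
    _ ≤ |P.coeff i| * y ^ i := by gcongr
    _ ≤ |P.coeff i| * y ^ P.natDegree := by
        gcongr
        exact Finset.mem_range_succ_iff.1 hi

theorem Real.pow_div_two_le_sqrt_pow {x : ℝ} (hx : 1 ≤ x) (n : ℕ) : x ^ (n / 2) ≤ √x ^ n :=
  calc x ^ (n / 2) = √x ^ (2 * (n / 2)) := by rw [pow_mul, sq_sqrt (by linarith)]
    _ ≤ √x ^ n := pow_le_pow_right₀ (one_le_sqrt.2 hx) (Nat.mul_div_le n 2)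

theorem Polynomial.exists_sum_eval_mul_three_pow_le (P : Polynomial ℝ) :
    ∃ C > 0, ∃ m : ℕ, ∀ N : ℕ,
      ∑ k ∈ Finset.range (N + 1), P.eval (k : ℝ) * 2 * 3 ^ ((N - k) / 2)
        ≤ C * ((N : ℝ) + 1) ^ m * √3 ^ N := by
  set A := ∑ i ∈ Finset.range (P.natDegree + 1), |P.coeff i|
  refine ⟨2 * A + 1, by positivity, P.natDegree + 1, fun N => ?_⟩
  calc _ ≤ ∑ _k ∈ Finset.range (N + 1), A * ((N : ℝ) + 1) ^ P.natDegree * 2 * √3 ^ N := by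
        refine Finset.sum_le_sum fun k hk => ?_
        have hkN : k ≤ N := Finset.mem_range_succ_iff.1 hk
        gcongr
        · refine P.eval_le_sum_abs_coeff_mul_pow ?_ (by simp)
          rw [Nat.abs_cast]
          exact_mod_cast hkN.trans N.le_succ
        · exact (Real.pow_div_two_le_sqrt_pow (by norm_num) _).trans
            (pow_le_pow_right₀ (Real.one_le_sqrt.2 (by norm_num)) (Nat.sub_le N k))
    _ = 2 * A * ((N : ℝ) + 1) ^ (P.natDegree + 1) * √3 ^ N := by
        rw [Finset.sum_const, Finset.card_range, nsmul_eq_mul]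
        push_cast
        ring
    _ ≤ _ := by gcongr; linarith

theorem div_two_mul_three_pow_sub_one_le {x c : ℝ} {N : ℕ} (hx : 0 ≤ x)
    (h : x ≤ c * √3 ^ N) : x / (2 * 3 ^ N - 1) ≤ c * (1 / √3) ^ N := by
  have h3 : (3 : ℝ) ^ N = √3 ^ N * √3 ^ N := by
    rw [← mul_pow, Real.mul_self_sqrt (by norm_num)]
  have h3N : (1 : ℝ) ≤ 3 ^ N := one_le_pow₀ (by norm_num)
  calc x / (2 * 3 ^ N - 1) ≤ x / 3 ^ N :=
        div_le_div_of_nonneg_left hx (by positivity) (by linarith)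
    _ ≤ c * √3 ^ N / 3 ^ N := by gcongr
    _ = c * (1 / √3) ^ N := by
        rw [h3, one_div, inv_pow]
        field_simp

theorem tendsto_mul_add_one_pow_rpow_inv {C : ℝ} (hC : 0 < C) (m : ℕ) :
    Tendsto (fun N : ℕ => (C * ((N : ℝ) + 1) ^ m) ^ (N : ℝ)⁻¹) atTop (𝓝 1) := by
  have hinv : Tendsto (fun N : ℕ => (N : ℝ)⁻¹) atTop (𝓝 0) :=
    tendsto_inv_atTop_zero.comp tendsto_natCast_atTop_atTop
  have hconst : Tendsto (fun N : ℕ => C ^ (N : ℝ)⁻¹) atTop (𝓝 1) := by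
    simpa using tendsto_const_nhds.rpow hinv (Or.inl hC.ne')
  have hsucc : Tendsto (fun N : ℕ => ((N : ℝ) + 1) ^ (N : ℝ)⁻¹) atTop (𝓝 1) := by
    refine ((tendsto_rpow_div_mul_add 1 1 (-1) one_ne_zero.symm).comp
      (tendsto_natCast_atTop_atTop.comp (tendsto_add_atTop_nat 1))).congr fun N => ?_
    simp
  have hprod := hconst.mul (hsucc.pow m)
  rw [one_pow, one_mul] at hprod
  refine hprod.congr fun N => ?_
  rw [Real.mul_rpow hC.le (by positivity), ← Real.rpow_natCast, ← Real.rpow_natCast _ m,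
    ← Real.rpow_mul (by positivity), ← Real.rpow_mul (by positivity), mul_comm (N : ℝ)⁻¹]

theorem limsup_rpow_inv_le_of_le_mul_pow {f : ℕ → ℝ} {C s : ℝ} {m : ℕ} (hC : 0 < C)
    (hs : 0 ≤ s) (h0 : ∀ N, 0 ≤ f N) (hf : ∀ N, f N ≤ C * ((N : ℝ) + 1) ^ m * s ^ N) :
    limsup (fun N : ℕ => f N ^ (N : ℝ)⁻¹) atTop ≤ s := by
  have hg : Tendsto (fun N : ℕ => (C * ((N : ℝ) + 1) ^ m) ^ (N : ℝ)⁻¹ * s) atTop (𝓝 s) := by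
    simpa using (tendsto_mul_add_one_pow_rpow_inv hC m).mul_const s
  have hle : ∀ᶠ N : ℕ in atTop,
      f N ^ (N : ℝ)⁻¹ ≤ (C * ((N : ℝ) + 1) ^ m) ^ (N : ℝ)⁻¹ * s := by
    filter_upwards [eventually_ne_atTop 0] with N hN
    calc f N ^ (N : ℝ)⁻¹ ≤ (C * ((N : ℝ) + 1) ^ m * s ^ N) ^ (N : ℝ)⁻¹ :=
          Real.rpow_le_rpow (h0 N) (hf N) (by positivity)
      _ = _ := by
          rw [Real.mul_rpow (by positivity) (by positivity), Real.pow_rpow_inv_natCast hs hN]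
  calc _ ≤ limsup (fun N : ℕ => (C * ((N : ℝ) + 1) ^ m) ^ (N : ℝ)⁻¹ * s) atTop :=
        limsup_le_limsup hle
          (isCoboundedUnder_le_of_le atTop fun N => Real.rpow_nonneg (h0 N) _) hg.isBoundedUnder_le
    _ = s := hg.limsup_eq

theorem conj_closed_growth_bound (S : Set (FreeGroup (Fin 2)))
    (hconj : ∀ w ∈ S, ∀ v : FreeGroup (Fin 2), v * w * v⁻¹ ∈ S)
    (b : ℕ → ℕ)
    (hb : ∀ k, b k = {w ∈ S | IsCyclicallyReduced w ∧ FreeGroup.norm w = k}.ncard)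
    (P : Polynomial ℝ) (hP : ∀ k : ℕ, (b k : ℝ) ≤ P.eval (k : ℝ)) :
    (∀ N : ℕ, ({w ∈ S | FreeGroup.norm w ≤ N}.ncard : ℝ)
        ≤ ∑ k ∈ Finset.range (N + 1), P.eval (k : ℝ) * 2 * 3 ^ ((N - k) / 2)) ∧
    limsup (fun N : ℕ =>
        (({w ∈ S | FreeGroup.norm w ≤ N}.ncard : ℝ)) ^ ((N : ℝ)⁻¹)) atTop
      ≤ Real.sqrt 3 ∧
    limsup (fun N : ℕ =>
        (({w ∈ S | FreeGroup.norm w ≤ N}.ncard : ℝ) / (2 * 3 ^ N - 1 : ℝ)) ^ ((N : ℝ)⁻¹))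
      atTop ≤ 1 / Real.sqrt 3 := by
  have hcount (N : ℕ) : ({w ∈ S | FreeGroup.norm w ≤ N}.ncard : ℝ)
      ≤ ∑ k ∈ Finset.range (N + 1), P.eval (k : ℝ) * 2 * 3 ^ ((N - k) / 2) := by
    simp only [isCyclicallyReduced_iff_toWord] at hb
    calc _ ≤ ∑ k ∈ Finset.range (N + 1),
          (b k : ℝ) * {v : FreeGroup (Fin 2) | v.norm ≤ (N - k) / 2}.ncard := by
          simp only [hb]
          exact_mod_cast FreeGroup.ncard_norm_le_le_sum_mul_of_conj_mem hconj N
      _ ≤ _ := Finset.sum_le_sum fun k _ => by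
          rw [mul_assoc]
          gcongr
          · exact (Nat.cast_nonneg _).trans (hP k)
          · exact hP k
          · exact_mod_cast FreeGroup.ncard_setOf_norm_le_le _
  obtain ⟨C, hC, m, hsum⟩ := P.exists_sum_eval_mul_three_pow_le
  have hgrowth (N : ℕ) := (hcount N).trans (hsum N)
  refine ⟨hcount, limsup_rpow_inv_le_of_le_mul_pow hC (by positivity)
    (fun N => Nat.cast_nonneg _) hgrowth, limsup_rpow_inv_le_of_le_mul_pow hC (by positivity)
    (fun N => ?_) fun N => div_two_mul_three_pow_sub_one_le (Nat.cast_nonneg _) (hgrowth N)⟩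
  have h3 : (1 : ℝ) ≤ 3 ^ N := one_le_pow₀ (by norm_num)
  exact div_nonneg (Nat.cast_nonneg _) (by linarith)
end
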